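/- Let D be odd, B ∈ S_D with |B| < (D−1)/2, E = 𝔼_B, and η_D = e_1 + e_3 + ... + e_D. If J ⊆ [1,D] is an interval with e_J ∈ E + 𝔽η_D, then J ∈ B. -/

import Mathlib

open Finset

abbrev Vec := ℕ →₀ ZMod 2

/-- The basis vector `e_i`. -/
noncomputable def e (i : ℕ) : Vec := Finsupp.single i 1

/-- For an interval `p = (a,b)` (representing `[a,b]`), the vector `e_I = ∑_{i∈[a,b]} e_i`. -/
noncomputable def eI (p : ℕ × ℕ) : Vec := ∑ j ∈ Finset.Icc p.1 p.2, e j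

/-- The map `ξ_i` on intervals. -/
def tint (i : ℕ) (p : ℕ × ℕ) : ℕ × ℕ :=
  if i ≤ p.1 then (p.1 + 2, p.2 + 2)
  else if p.2 + 2 ≤ i then p
  else (p.1, p.2 + 2)

/-- The map `t_i` on sets of intervals: `t_i(B') = ξ_i(B') ∪ {[i,i]}`. -/
def tmap (i : ℕ) (B : Finset (ℕ × ℕ)) : Finset (ℕ × ℕ) :=
  B.image (tint i) ∪ {(i, i)}

/-- The inductively defined family `S_D`. -/
inductive IsS : ℕ → Finset (ℕ × ℕ) → Prop
  | empty (D : ℕ) : IsS D ∅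
  | one : IsS 1 {(1, 1)}
  | step (D i : ℕ) (B' : Finset (ℕ × ℕ)) (h1 : 1 ≤ i) (h2 : i ≤ D + 2)
      (h : IsS D B') : IsS (D + 2) (tmap i B')

def primEven (D k : ℕ) : Finset (ℕ × ℕ) := (Finset.Icc 1 k).image fun j => (j, D + 1 - j)
def primOddA (D k : ℕ) : Finset (ℕ × ℕ) := (Finset.Icc 1 k).image fun j => (j, D - j)
def primOddB (D k : ℕ) : Finset (ℕ × ℕ) := (Finset.Icc 1 k).image fun j => (j + 1, D + 1 - j)

/-- The primitive elements of `𝕊_D`. -/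
def IsPrim (D : ℕ) (B : Finset (ℕ × ℕ)) : Prop :=
  B = ∅ ∨
  (Even D ∧ ∃ k, 1 ≤ k ∧ k ≤ D / 2 ∧ B = primEven D k) ∨
  (Odd D ∧ ∃ k, Odd k ∧ 1 ≤ k ∧ k ≤ (D - 1) / 2 ∧ (B = primOddA D k ∨ B = primOddB D k))

/-- The inductively defined family `𝕊_D`. -/
inductive IsSS : ℕ → Finset (ℕ × ℕ) → Prop
  | prim (D : ℕ) (B : Finset (ℕ × ℕ)) : IsPrim D B → IsSS D B
  | one : IsSS 1 {(1, 1)}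
  | step (D i : ℕ) (B' : Finset (ℕ × ℕ)) (h1 : 1 ≤ i) (h2 : i ≤ D + 2)
      (h : IsSS D B') : IsSS (D + 2) (tmap i B')

/-- The subspace `𝔼_B` spanned by the `e_I`, `I ∈ B`. -/
noncomputable def EB (B : Finset (ℕ × ℕ)) : Submodule (ZMod 2) Vec :=
  Submodule.span (ZMod 2) (eI '' (B : Set (ℕ × ℕ)))

/-- Two intervals are non-touching. -/
def Nontouch (p q : ℕ × ℕ) : Prop := p.2 + 2 ≤ q.1 ∨ q.2 + 2 ≤ p.1

/-- `p ≺ q`: `p = [a,b]` is strictly nested inside `q = [a',b']`, i.e. `a' < a ≤ b < b'`. -/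
def Nested (p q : ℕ × ℕ) : Prop := q.1 < p.1 ∧ p.1 ≤ p.2 ∧ p.2 < q.2

/-- `η_D = e_1 + e_3 + ⋯ + e_D` (`D` odd). -/
noncomputable def eta (D : ℕ) : Vec := ∑ j ∈ (Finset.Icc 1 D).filter (fun j => j % 2 = 1), e j

noncomputable def Tfun (i k : ℕ) : Vec :=
  if k + 1 < i then e k
  else if k + 1 = i then e k + e (k + 1) + e (k + 2)
  else e (k + 2)

/-- The linear map `T_i : V_{D-2} → V_D`. -/
noncomputable def Tlin (i : ℕ) : Vec →ₗ[ZMod 2] Vec :=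
  Finsupp.linearCombination (ZMod 2) (Tfun i)

/-- The inductively defined family `𝒻(V_D)` of subspaces. -/
inductive IsF : ℕ → Submodule (ZMod 2) Vec → Prop
  | zero (D : ℕ) : IsF D ⊥
  | one : IsF 1 (Submodule.span (ZMod 2) {e 1})
  | step (D i : ℕ) (E' : Submodule (ZMod 2) Vec) (h1 : 1 ≤ i) (h2 : i ≤ D + 2)
      (h : IsF D E') :
      IsF (D + 2) (Submodule.map (Tlin i) E' ⊔ Submodule.span (ZMod 2) {e i})

/-- The subspace `V_D = ⟨e_1,…,e_D⟩`. -/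
noncomputable def VD (D : ℕ) : Submodule (ZMod 2) Vec :=
  Submodule.span (ZMod 2) (e '' Set.Icc 1 D)

/-- The symplectic form with `(e_i,e_j) = 1` iff `|i-j| = 1`. -/
noncomputable def symp (x y : Vec) : ZMod 2 :=
  x.sum fun i xi => xi * (y (i + 1) + if 1 ≤ i then y (i - 1) else 0)

/-! If `e_J = u + η_D` with `u ∈ 𝔼_B`, then `u` vanishes off `σ`, so `e_J` agrees with `η_D` at three
uncovered points `x < y < z` of parities odd, even, odd; but then `x, z ∈ J` and `y ∉ J`, which is
impossible for an interval. Hence `e_J ∈ 𝔼_B`, i.e. `e_J = ∑_{I ∈ S} e_I` for some `S ⊆ B`. In a laminar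
family the interval `M ∈ S` with the least left end is the only one containing either of its ends, and
no interval of `S` contains the point just outside `M` on either side, so the sum is `1` on the ends of
`M` and `0` just outside them; this forces `J = M`. -/

def IsLaminar (B : Finset (ℕ × ℕ)) : Prop :=
  ∀ p ∈ B, ∀ q ∈ B, p = q ∨ Nontouch p q ∨ Nested p q ∨ Nested q p

lemma eI_apply (p : ℕ × ℕ) (j : ℕ) : eI p j = if p.1 ≤ j ∧ j ≤ p.2 then 1 else 0 := by
  simp [eI, e, Finsupp.finsetSum_apply, Finsupp.single_apply]

lemma eta_apply (D j : ℕ) : eta D j = if 1 ≤ j ∧ j ≤ D ∧ j % 2 = 1 then 1 else 0 := by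
  simp [eta, e, Finsupp.finsetSum_apply, Finsupp.single_apply, and_assoc]

lemma sum_eI_apply_eq_zero {S : Finset (ℕ × ℕ)} {j : ℕ} (hj : ∀ p ∈ S, ¬(p.1 ≤ j ∧ j ≤ p.2)) :
    (∑ p ∈ S, eI p) j = 0 := by
  rw [Finsupp.finsetSum_apply]
  exact Finset.sum_eq_zero fun p hp => by rw [eI_apply, if_neg (hj p hp)]

lemma sum_eI_apply_eq_one {S : Finset (ℕ × ℕ)} {M : ℕ × ℕ} {j : ℕ} (hM : M ∈ S)
    (hjM : M.1 ≤ j ∧ j ≤ M.2) (huniq : ∀ p ∈ S, p.1 ≤ j ∧ j ≤ p.2 → p = M) :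
    (∑ p ∈ S, eI p) j = 1 := by
  rw [Finsupp.finsetSum_apply, Finset.sum_eq_single_of_mem M hM, eI_apply, if_pos hjM]
  exact fun p hp hpM => by rw [eI_apply, if_neg fun hjp => hpM (huniq p hp hjp)]

lemma exists_subset_eq_sum_of_mem_EB {B : Finset (ℕ × ℕ)} {v : Vec} (hv : v ∈ EB B) :
    ∃ S ⊆ B, v = ∑ p ∈ S, eI p := by
  obtain ⟨l, hl, rfl⟩ := (Finsupp.mem_span_image_iff_linearCombination (ZMod 2)).mp hv
  refine ⟨l.support, fun p hp => by exact_mod_cast hl hp, ?_⟩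
  rw [Finsupp.linearCombination_apply, Finsupp.sum]
  refine Finset.sum_congr rfl fun p hp => ?_
  have hl1 : l p = 1 := by
    have := Finsupp.mem_support_iff.mp hp
    generalize l p = c at this ⊢
    revert c; decide
  rw [hl1, one_smul]

lemma apply_eq_zero_of_mem_EB {B : Finset (ℕ × ℕ)} {v : Vec} (hv : v ∈ EB B) {j : ℕ}
    (hj : ∀ p ∈ B, ¬(p.1 ≤ j ∧ j ≤ p.2)) : v j = 0 := by
  obtain ⟨S, hSB, rfl⟩ := exists_subset_eq_sum_of_mem_EB hv
  exact sum_eI_apply_eq_zero fun p hp => hj p (hSB hp)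

namespace IsS

variable {D : ℕ} {B : Finset (ℕ × ℕ)}

lemma bounds (h : IsS D B) : ∀ p ∈ B, 1 ≤ p.1 ∧ p.1 ≤ p.2 ∧ p.2 ≤ D := by
  induction h with
  | empty D => simp
  | one => simp
  | step D i B' h1 h2 h ih =>
    simp only [tmap, Finset.mem_union, Finset.mem_image, Finset.mem_singleton]
    rintro p (⟨q, hq, rfl⟩ | rfl)
    · have := ih q hq
      simp only [tint]
      split_ifs <;> omega
    · omega

lemma isLaminar (h : IsS D B) : IsLaminar B := by
  induction h with
  | empty D => simp [IsLaminar]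
  | one => simp [IsLaminar]
  | step D i B' h1 h2 h ih =>
    simp only [IsLaminar, tmap, Finset.mem_union, Finset.mem_image, Finset.mem_singleton]
    rintro p (⟨p', hp', rfl⟩ | rfl) q (⟨q', hq', rfl⟩ | rfl)
    · have hp := h.bounds p' hp'
      have hq := h.bounds q' hq'
      rcases ih p' hp' q' hq' with rfl | hpq | hpq | hpq
      · exact Or.inl rfl
      all_goals
        simp only [tint, Nontouch, Nested] at hpq ⊢
        split_ifs <;> simp_all <;> omega
    all_goals
      first
      | exact Or.inl rfl
      | have := h.bounds _ ‹_›
        simp only [tint, Nontouch, Nested]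
        split_ifs <;> simp_all

lemma card_tmap (h : IsS D B) (i : ℕ) : (tmap i B).card = B.card + 1 := by
  rw [tmap, Finset.card_union_of_disjoint, Finset.card_image_of_injOn, Finset.card_singleton]
  · intro p hp q hq hpq
    have := h.bounds p hp
    have := h.bounds q hq
    simp only [tint] at hpq
    split_ifs at hpq <;> simp_all [Prod.ext_iff] <;> omega
  · simp only [Finset.disjoint_singleton_right, Finset.mem_image, not_exists, not_and]
    intro p _ hp
    simp only [tint, Prod.ext_iff] at hp
    split_ifs at hp <;> omega

end IsS

/-- `t_i` inserts two new points at `i`, shifting every point `j ≥ i` to `j + 2`. -/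
lemma not_covered_tmap {B : Finset (ℕ × ℕ)} {j : ℕ} (hj : ∀ p ∈ B, ¬(p.1 ≤ j ∧ j ≤ p.2))
    (i : ℕ) (p : ℕ × ℕ) (hp : p ∈ tmap i B) :
    ¬(p.1 ≤ (if j < i then j else j + 2) ∧ (if j < i then j else j + 2) ≤ p.2) := by
  simp only [tmap, Finset.mem_union, Finset.mem_image, Finset.mem_singleton] at hp
  rcases hp with ⟨q, hq, rfl⟩ | rfl
  · have := hj q hq
    simp only [tint]
    split_ifs <;> omega
  · split_ifs <;> omega

lemma IsS.exists_uncovered_odd_even_odd {D : ℕ} {B : Finset (ℕ × ℕ)} (h : IsS D B)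
    (hc : B.card < (D - 1) / 2) :
    ∃ x y z : ℕ, 1 ≤ x ∧ x < y ∧ y < z ∧ z ≤ D ∧ x % 2 = 1 ∧ y % 2 = 0 ∧ z % 2 = 1 ∧
      (∀ p ∈ B, ¬(p.1 ≤ x ∧ x ≤ p.2)) ∧ (∀ p ∈ B, ¬(p.1 ≤ y ∧ y ≤ p.2)) ∧
      (∀ p ∈ B, ¬(p.1 ≤ z ∧ z ≤ p.2)) := by
  induction h with
  | empty D => exact ⟨1, 2, 3, by omega, by omega, by omega, by omega, rfl, rfl, rfl, by simp⟩
  | one => simp at hc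
  | step D i B' h1 h2 h ih =>
    rw [h.card_tmap i] at hc
    obtain ⟨x, y, z, h1x, hxy, hyz, hzD, hx, hy, hz, hBx, hBy, hBz⟩ := ih (by omega)
    refine ⟨if x < i then x else x + 2, if y < i then y else y + 2, if z < i then z else z + 2,
      ?_, ?_, ?_, ?_, ?_, ?_, ?_, not_covered_tmap hBx i, not_covered_tmap hBy i,
      not_covered_tmap hBz i⟩ <;> split_ifs <;> omega

lemma IsLaminar.inside_or_right_of_le_fst {S : Finset (ℕ × ℕ)} (hS : IsLaminar S)
    (hS' : ∀ p ∈ S, p.1 ≤ p.2) {M q : ℕ × ℕ} (hM : M ∈ S) (hq : q ∈ S) (hMq : M.1 ≤ q.1)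
    (hqM : q ≠ M) : (M.1 < q.1 ∧ q.2 < M.2) ∨ M.2 + 2 ≤ q.1 := by
  have := hS' q hq
  rcases hS q hq M hM with h | h | h | h
  · exact absurd h hqM
  all_goals simp only [Nontouch, Nested] at h; omega

lemma IsLaminar.mem_of_eI_eq_sum {S : Finset (ℕ × ℕ)} (hS : IsLaminar S)
    (hS' : ∀ p ∈ S, p.1 ≤ p.2) {a b : ℕ} (hab : a ≤ b) (heq : eI (a, b) = ∑ p ∈ S, eI p) :
    (a, b) ∈ S := by
  have outside : ∀ j, (∀ p ∈ S, ¬(p.1 ≤ j ∧ j ≤ p.2)) → ¬(a ≤ j ∧ j ≤ b) := by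
    intro j hj hjab
    have := congrArg (· j) heq
    simp only [eI_apply, if_pos hjab, sum_eI_apply_eq_zero hj] at this
    exact one_ne_zero this
  have inside : ∀ M ∈ S, ∀ j, M.1 ≤ j ∧ j ≤ M.2 → (∀ p ∈ S, p.1 ≤ j ∧ j ≤ p.2 → p = M) →
      a ≤ j ∧ j ≤ b := by
    intro M hM j hjM huniq
    by_contra hjab
    have := congrArg (· j) heq
    simp only [eI_apply, if_neg hjab, sum_eI_apply_eq_one hM hjM huniq] at this
    exact zero_ne_one this
  have hne : S.Nonempty := by
    by_contra hempty
    exact outside a (by simp_all) ⟨le_rfl, hab⟩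
  obtain ⟨M, hM, hmin⟩ := S.exists_min_image Prod.fst hne
  have hM' := hS' M hM
  have split q (hq : q ∈ S) (hqM : q ≠ M) := hS.inside_or_right_of_le_fst hS' hM hq (hmin q hq) hqM
  have haM : a ≤ M.1 := (inside M hM M.1 ⟨le_rfl, hM'⟩ fun q hq hjq =>
    by_contra fun hqM => by have := hmin q hq; have := split q hq hqM; omega).1
  have hbM : M.2 ≤ b := (inside M hM M.2 ⟨hM', le_rfl⟩ fun q hq hjq =>
    by_contra fun hqM => by have := split q hq hqM; omega).2
  have hMa : M.1 ≤ a := by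
    by_contra hlt
    exact outside a (fun q hq hjq => by have := hmin q hq; omega) ⟨le_rfl, hab⟩
  have hMb : b ≤ M.2 := by
    by_contra hlt
    refine outside (M.2 + 1) (fun q hq hjq => ?_) ⟨by omega, by omega⟩
    by_cases hqM : q = M
    · subst hqM; omega
    · have := split q hq hqM; omega
  obtain rfl : (a, b) = M := Prod.ext (by omega) (by omega)
  exact hM

lemma eI_ne_add_eta {D a b x y z : ℕ} {v : Vec} (hx1 : 1 ≤ x) (hxy : x < y) (hyz : y < z)
    (hzD : z ≤ D) (hx : x % 2 = 1) (hy : y % 2 = 0) (hz : z % 2 = 1) (hvx : v x = 0)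
    (hvy : v y = 0) (hvz : v z = 0) : eI (a, b) ≠ v + eta D := by
  intro heq
  have mem_iff j (hvj : v j = 0) : a ≤ j ∧ j ≤ b ↔ 1 ≤ j ∧ j ≤ D ∧ j % 2 = 1 := by
    have := congrArg (· j) heq
    simp only [Finsupp.add_apply, eI_apply, eta_apply, hvj, zero_add] at this
    split_ifs at this <;> simp_all; omega
  have := mem_iff x hvx
  have := mem_iff y hvy
  have := mem_iff z hvz
  omega

theorem stmt12_general (D : ℕ) (B : Finset (ℕ × ℕ)) (hB : IsS D B)
    (hc : B.card < (D - 1) / 2) (a b : ℕ) (h2 : a ≤ b)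
    (h : eI (a, b) ∈ EB B ⊔ Submodule.span (ZMod 2) {eta D}) :
    (a, b) ∈ B := by
  obtain ⟨u, hu, w, hw, huw⟩ := Submodule.mem_sup.mp h
  obtain ⟨c, rfl⟩ := Submodule.mem_span_singleton.mp hw
  rcases (by decide : ∀ c : ZMod 2, c = 0 ∨ c = 1) c with rfl | rfl
  · rw [zero_smul, add_zero] at huw
    obtain ⟨S, hSB, hsum⟩ := exists_subset_eq_sum_of_mem_EB (huw ▸ hu)
    have hS : IsLaminar S := fun p hp q hq => hB.isLaminar p (hSB hp) q (hSB hq)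
    exact hSB (hS.mem_of_eI_eq_sum (fun p hp => (hB.bounds p (hSB hp)).2.1) h2 hsum)
  · rw [one_smul] at huw
    obtain ⟨x, y, z, h1x, hxy, hyz, hzD, hx, hy, hz, hBx, hBy, hBz⟩ :=
      hB.exists_uncovered_odd_even_odd hc
    exact absurd huw.symm (eI_ne_add_eta h1x hxy hyz hzD hx hy hz
      (apply_eq_zero_of_mem_EB hu hBx) (apply_eq_zero_of_mem_EB hu hBy)
      (apply_eq_zero_of_mem_EB hu hBz))

/-- `D` odd, `B ∈ S_D`, `|B| < (D−1)/2`; if `J ⊆ [1,D]` is an interval with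
`e_J ∈ E + 𝔽η_D`, then `J ∈ B`. -/
theorem stmt12 (D : ℕ) (hD : Odd D) (B : Finset (ℕ × ℕ)) (hB : IsS D B)
    (hc : B.card < (D - 1) / 2) (a b : ℕ) (h1 : 1 ≤ a) (h2 : a ≤ b) (h3 : b ≤ D)
    (h : eI (a, b) ∈ EB B ⊔ Submodule.span (ZMod 2) {eta D}) :
    (a, b) ∈ B :=
  stmt12_general D B hB hc a b h2 h
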